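/- arXiv:2012.12470 — 6 statements merged into one kernel-verified Lean document; each statement's English description precedes it below -/
import Mathlib

section
/- Let A be a symmetric positive definite real 3×3 matrix, u ∈ ℝ³ a unit vector, and γ > 0. Then U(R,θ) ≥ 0 for every R ∈ SO(3) and θ ∈ ℝ, and U(R,θ) = 0 if and only if R = I₃ and θ = 0 (i.e., U is a potential function on SO(3)×ℝ with respect to (I₃,0)). -/
open Matrix

noncomputable section

abbrev M3 : Type := Matrix (Fin 3) (Fin 3) ℝ
abbrev V3 : Type := Fin 3 → ℝ

/-- skew-symmetric matrix associated to `x`: `skew x *ᵥ y = x ×₃ y`. -/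
def skew (x : V3) : M3 :=
  !![0, -x 2, x 1; x 2, 0, -x 0; -x 1, x 0, 0]

/-- the special orthogonal group SO(3) as a subset of 3×3 matrices -/
def SO3 : Set M3 := {R | Rᵀ * R = 1 ∧ R.det = 1}

/-- Rodrigues formula -/
def Ra (θ : ℝ) (u : V3) : M3 :=
  1 + Real.sin θ • skew u + (1 - Real.cos θ) • (skew u * skew u)

/-- `psi M = vec (P_a M)`, the vector part of the antisymmetric projection -/
def psi (M : M3) : V3 :=
  ![(M 2 1 - M 1 2) / 2, (M 0 2 - M 2 0) / 2, (M 1 0 - M 0 1) / 2]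

/-- the angular-warping transformation `T(R,θ) = R · Ra(θ,u)` -/
def Tmap (u : V3) (R : M3) (θ : ℝ) : M3 := R * Ra θ u

/-- the potential function `U(R,θ)` on SO(3) × ℝ -/
def Ufun (A : M3) (u : V3) (γ : ℝ) (R : M3) (θ : ℝ) : ℝ :=
  (A * (1 - Tmap u R θ)).trace + γ / 2 * θ ^ 2

/-- Euclidean norm on ℝ³ -/
def enorm3 (x : V3) : ℝ := Real.sqrt (x ⬝ᵥ x)

/-- Frobenius norm of a 3×3 matrix -/
def fnorm (M : M3) : ℝ := Real.sqrt ((Mᵀ * M).trace)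

/-- `E(M) := (tr(M) I − Mᵀ)/2` -/
def Emap (M : M3) : M3 := (2⁻¹ : ℝ) • (M.trace • (1 : M3) - Mᵀ)

/-- `D_R(R,θ)` from Lemma 2 -/
def DR (A : M3) (u : V3) (R : M3) (θ : ℝ) : M3 :=
  Ra θ u * Emap (A * Tmap u R θ) * (Ra θ u)ᵀ

/-- `D_θ(R,θ)` from Lemma 2 -/
def Dθ (A : M3) (u : V3) (R : M3) (θ : ℝ) : V3 :=
  (Ra θ u * Emap (A * Tmap u R θ)) *ᵥ u - skew (Ra θ u *ᵥ psi (A * Tmap u R θ)) *ᵥ u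

/-- Δ(v,u) from the construction of the synergistic gap -/
def Delta (A : M3) (v u : V3) : ℝ :=
  u ⬝ᵥ ((A.trace • (1 : M3) - A - (2 * (v ⬝ᵥ A *ᵥ v)) • ((1 : M3) - vecMulVec v v)) *ᵥ u)

/-- `v` is a unit eigenvector of `A` -/
def IsUnitEigen (A : M3) (v : V3) : Prop :=
  v ⬝ᵥ v = 1 ∧ ∃ lam : ℝ, A *ᵥ v = lam • v

/-- Ā := (tr(A) I − A)/2 -/
def Abar (A : M3) : M3 := (2⁻¹ : ℝ) • (A.trace • (1 : M3) - A)

/-- `lam` is an eigenvalue of `M` -/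
def IsEigen (M : M3) (lam : ℝ) : Prop := ∃ w : V3, w ≠ 0 ∧ M *ᵥ w = lam • w


/-! ### Auxiliary lemmas -/

lemma skew_transpose' (u : V3) : (skew u)ᵀ = -skew u := by
  ext i j; fin_cases i <;> fin_cases j <;> simp [skew]

lemma skew_cube' (u : V3) (hu : u ⬝ᵥ u = 1) : skew u * skew u * skew u = -skew u := by
  have hu' : u 0 * u 0 + u 1 * u 1 + u 2 * u 2 = 1 := by
    simpa [dotProduct, Fin.sum_univ_three] using hu
  ext i j
  fin_cases i <;> fin_cases j <;>
    simp [skew, Matrix.mul_apply, Fin.sum_univ_three] <;>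
    first | ring1 | linear_combination (u 0 : ℝ) * hu' | linear_combination (-(u 0) : ℝ) * hu' | linear_combination (u 1 : ℝ) * hu' | linear_combination (-(u 1) : ℝ) * hu' | linear_combination (u 2 : ℝ) * hu' | linear_combination (-(u 2) : ℝ) * hu'

lemma Ra_orth' (θ : ℝ) (u : V3) (hu : u ⬝ᵥ u = 1) : (Ra θ u)ᵀ * Ra θ u = 1 := by
  have h3 := skew_cube' u hu
  have hT : (Ra θ u)ᵀ = 1 - Real.sin θ • skew u
      + (1 - Real.cos θ) • (skew u * skew u) := by
    simp only [Ra, transpose_add, transpose_smul, transpose_mul, transpose_one,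
      skew_transpose', neg_mul_neg, neg_mul, mul_neg, neg_neg]
    module
  have expand : (Ra θ u)ᵀ * Ra θ u
      = 1 + (2 * (1 - Real.cos θ) - Real.sin θ ^ 2 - (1 - Real.cos θ) ^ 2) •
        (skew u * skew u) := by
    rw [hT, Ra]
    simp only [add_mul, mul_add, sub_mul, mul_sub, one_mul, mul_one, smul_mul_assoc,
      mul_smul_comm, smul_smul, smul_add, smul_sub, smul_neg, ← mul_assoc]
    rw [h3]
    simp only [neg_mul, mul_neg, smul_neg]
    match_scalars <;> ring
  rw [expand]
  have hz : 2 * (1 - Real.cos θ) - Real.sin θ ^ 2 - (1 - Real.cos θ) ^ 2 = 0 := by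
    nlinarith [Real.sin_sq_add_cos_sq θ]
  rw [hz]; simp

lemma Ra_zero' (u : V3) : Ra 0 u = 1 := by simp [Ra]

lemma col_dot' (A B : M3) (j : Fin 3) :
    ((Bᵀ * A * B) j j) = (fun i => B i j) ⬝ᵥ (A *ᵥ fun i => B i j) := by
  simp only [Matrix.mul_apply, Matrix.transpose_apply, dotProduct, Matrix.mulVec,
    Finset.sum_mul, Finset.mul_sum, dotProduct]
  rw [Finset.sum_comm]
  apply Finset.sum_congr rfl; intro k _
  apply Finset.sum_congr rfl; intro i _
  ring

lemma dot_pos' (A : M3) (hA : A.PosDef) {x : V3} (hx : x ≠ 0) : 0 < x ⬝ᵥ (A *ᵥ x) := by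
  have := hA.re_dotProduct_pos hx
  simpa [star_trivial] using this

lemma dot_nonneg' (A : M3) (hA : A.PosDef) (x : V3) : 0 ≤ x ⬝ᵥ (A *ᵥ x) := by
  rcases eq_or_ne x 0 with rfl | hx
  · simp
  · exact (dot_pos' A hA hx).le

lemma trace_key' (A : M3) (hA : A.PosDef) (Q : M3) (hQ : Qᵀ * Q = 1) :
    0 ≤ (A * (1 - Q)).trace ∧ ((A * (1 - Q)).trace = 0 ↔ Q = 1) := by
  have hQ' : Q * Qᵀ = 1 := mul_eq_one_comm.mp hQ
  have hsym : Aᵀ = A := hA.1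
  set B : M3 := 1 - Q with hB
  have e1 : (Bᵀ * A * B).trace = 2 * (A * B).trace := by
    have expand : Bᵀ * A * B = A - A * Q - Qᵀ * A + Qᵀ * A * Q := by
      rw [hB]; simp only [transpose_sub, transpose_one]
      noncomm_ring
    have t1 : (Qᵀ * A * Q).trace = A.trace := by
      rw [Matrix.trace_mul_cycle, hQ', Matrix.one_mul]
    have t2 : (Qᵀ * A).trace = (A * Q).trace := by
      rw [← Matrix.trace_transpose (Qᵀ * A), Matrix.transpose_mul, Matrix.transpose_transpose,
        hsym, Matrix.trace_mul_comm]
    have t3 : (A * B).trace = A.trace - (A * Q).trace := by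
      rw [hB, Matrix.mul_sub, Matrix.mul_one, Matrix.trace_sub]
    rw [expand, Matrix.trace_add, Matrix.trace_sub, Matrix.trace_sub, t1, t2, t3]
    ring
  have e2 : (Bᵀ * A * B).trace = ∑ j : Fin 3, (fun i => B i j) ⬝ᵥ (A *ᵥ fun i => B i j) := by
    rw [Matrix.trace]
    exact Finset.sum_congr rfl fun j _ => col_dot' A B j
  have hterm : ∀ j : Fin 3, 0 ≤ (fun i => B i j) ⬝ᵥ (A *ᵥ fun i => B i j) :=
    fun j => dot_nonneg' A hA _
  have hsum : 0 ≤ (Bᵀ * A * B).trace := by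
    rw [e2]; exact Finset.sum_nonneg fun j _ => hterm j
  constructor
  · linarith [e1 ▸ hsum]
  constructor
  · intro h0
    have hz : (Bᵀ * A * B).trace = 0 := by rw [e1, h0]; ring
    rw [e2] at hz
    have hall := (Finset.sum_eq_zero_iff_of_nonneg (fun j _ => hterm j)).mp hz
    have hBzero : B = 0 := by
      ext i j
      have hcol : (fun i => B i j) = 0 := by
        by_contra hc
        exact (dot_pos' A hA hc).ne' (hall j (Finset.mem_univ j))
      exact congrFun hcol i
    have : (1 : M3) - Q = 0 := hBzero
    rw [sub_eq_zero] at this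
    exact this.symm
  · intro h
    simp [hB, h]

lemma Tmap_orth' (u : V3) (hu : u ⬝ᵥ u = 1) (R : M3) (hR : R ∈ SO3) (θ : ℝ) :
    (Tmap u R θ)ᵀ * Tmap u R θ = 1 := by
  have assoc : (Ra θ u)ᵀ * Rᵀ * (R * Ra θ u) = (Ra θ u)ᵀ * ((Rᵀ * R) * Ra θ u) := by
    noncomm_ring
  rw [Tmap, Matrix.transpose_mul, assoc, hR.1, Matrix.one_mul, Ra_orth' θ u hu]

theorem potential_function_U
    (A : M3) (hA : A.PosDef) (u : V3) (hu : u ⬝ᵥ u = 1) (γ : ℝ) (hγ : 0 < γ) :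
    (∀ R ∈ SO3, ∀ θ : ℝ, 0 ≤ Ufun A u γ R θ) ∧
    (∀ R ∈ SO3, ∀ θ : ℝ, Ufun A u γ R θ = 0 ↔ R = 1 ∧ θ = 0) := by
  constructor
  · intro R hR θ
    obtain ⟨hnn, _⟩ := trace_key' A hA _ (Tmap_orth' u hu R hR θ)
    have h2 : 0 ≤ γ / 2 * θ ^ 2 := by positivity
    simp only [Ufun]
    linarith
  · intro R hR θ
    obtain ⟨hnn, hiff⟩ := trace_key' A hA _ (Tmap_orth' u hu R hR θ)
    constructor
    · intro h0
      simp only [Ufun] at h0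
      have h2 : 0 ≤ γ / 2 * θ ^ 2 := by positivity
      have htr : (A * (1 - Tmap u R θ)).trace = 0 := by linarith
      have hq : γ / 2 * θ ^ 2 = 0 := by linarith
      have hθ : θ = 0 := by
        have hγ2 : (γ / 2 : ℝ) ≠ 0 := by positivity
        have hsq : θ ^ 2 = 0 := (mul_eq_zero.mp hq).resolve_left hγ2
        exact (pow_eq_zero_iff two_ne_zero).mp hsq
      subst hθ
      have hT1 : Tmap u R 0 = 1 := hiff.mp htr
      have : Tmap u R 0 = R := by rw [Tmap, Ra_zero', Matrix.mul_one]
      exact ⟨by rw [← this, hT1], rfl⟩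
    · rintro ⟨rfl, rfl⟩
      simp [Ufun, Tmap, Ra_zero']
end
end

section
/- Let A be a symmetric positive definite real 3×3 matrix, u ∈ ℝ³ a unit vector, γ > 0, R ∈ SO(3) and θ ∈ ℝ. Then the two conditions ψ(A·T(R,θ)) = 0 and γθ + 2 uᵀ ψ(A·T(R,θ)) = 0 hold simultaneously if and only if θ = 0 and either R = I₃ or R = Ra(π,v) for some unit vector v that is an eigenvector of A. (In other words, the set of critical points of U is Ψ_V × {0}, where Ψ_V = {I₃} ∪ Ra(π, E(A)) and E(A) is the set of unit eigenvectors of A.) -/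
open Matrix

noncomputable section

/-!
At a critical point `ψ(A T) = 0`, so the second condition reads `γ θ = 0`: hence `θ = 0`, `T = R`
and what remains is that `A R` is symmetric. Then `(A R)² = A R Rᵀ A = A²`, so `A R` is a
self-adjoint square root of `A²`; its absolute value is the positive square root `A`, which
therefore commutes with `A R`, hence with `R`, and `Rᵀ A = A R = R A` forces `Rᵀ = R`.
A symmetric rotation is an involution whose eigenvalues `±1` have product `1`, so it is `I₃`
or a half-turn `2 v vᵀ - I₃ = Ra(π, v)`, and `A (2 v vᵀ - I₃)` is symmetric exactly when `v`
is an eigenvector of `A`.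
-/

section SquareRoot

variable {A : Type*} [Ring A] [StarRing A] [TopologicalSpace A] [Algebra ℝ A]
  [ContinuousFunctionalCalculus ℝ A IsSelfAdjoint] [PartialOrder A] [StarOrderedRing A]
  [NonnegSpectrumClass ℝ A] [IsTopologicalRing A] [T2Space A]

theorem commute_of_mul_self_eq_mul_self {a b : A} (ha : 0 ≤ a) (hb : IsSelfAdjoint b)
    (h : b * b = a * a) : Commute a b := by
  have habs : CFC.abs b = a := by rw [CFC.abs, hb.star_eq, h, CFC.sqrt_mul_self a]
  exact habs ▸ CFC.commute_abs_self b

end SquareRoot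

section Matrices

variable {n 𝕜 : Type*} [Fintype n] [RCLike 𝕜]

open scoped MatrixOrder ComplexOrder in
theorem Matrix.PosDef.isHermitian_of_isHermitian_mul [DecidableEq n] {A R : Matrix n n 𝕜}
    (hA : A.PosDef) (hR : R ∈ unitaryGroup n 𝕜) (h : (A * R).IsHermitian) : R.IsHermitian := by
  have hRA : Rᴴ * A = A * R := by rw [← h.eq, conjTranspose_mul, hA.isHermitian.eq]
  have hsq : (A * R) * (A * R) = A * A :=
    calc (A * R) * (A * R) = A * (R * star R) * A := by
          rw [star_eq_conjTranspose, Matrix.mul_assoc, Matrix.mul_assoc, ← hRA, Matrix.mul_assoc]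
      _ = A * A := by rw [mem_unitaryGroup_iff.mp hR, Matrix.mul_one]
  have hcomm : A * R = R * A := by
    have h' := (commute_of_mul_self_eq_mul_self hA.posSemidef.nonneg h hsq).eq
    simp only [← Matrix.mul_assoc] at h'
    exact hA.isUnit.mul_left_cancel (by rw [← Matrix.mul_assoc, h', Matrix.mul_assoc])
  exact hA.isUnit.mul_right_cancel (by rw [hRA, hcomm])

theorem Matrix.IsHermitian.eigenvalues_eq_one_or_neg_one [DecidableEq n] {R : Matrix n n 𝕜}
    (hR : R.IsHermitian) (hinv : R * R = 1) (i : n) :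
    hR.eigenvalues i = 1 ∨ hR.eigenvalues i = -1 := by
  have : Nonempty n := ⟨i⟩
  have hsq := spectrum.pow_mem_pow R 2 (hR.eigenvalues_mem_spectrum_real i)
  rw [sq R, hinv, spectrum.one_eq, Set.mem_singleton_iff] at hsq
  exact sq_eq_one_iff.mp hsq

theorem Matrix.mul_diagonal_single_mul_transpose [DecidableEq n] {α : Type*} [CommSemiring α]
    (U : Matrix n n α) (i : n) : U * diagonal (Pi.single i 1) * Uᵀ = vecMulVec (Uᵀ i) (Uᵀ i) := by
  ext a b
  simp [mul_apply, diagonal, Pi.single_apply, vecMulVec_apply]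

theorem Matrix.isSymm_vecMulVec_iff {w v : n → ℝ} (hv : v ⬝ᵥ v = 1) :
    (vecMulVec w v).IsSymm ↔ ∃ μ : ℝ, w = μ • v := by
  rw [IsSymm, transpose_vecMulVec]
  constructor
  · intro h
    refine ⟨w ⬝ᵥ v, ?_⟩
    simpa [vecMulVec_mulVec, hv] using (congrArg (· *ᵥ v) h).symm
  · rintro ⟨μ, rfl⟩
    rw [smul_vecMulVec, vecMulVec_smul]

theorem Matrix.IsSymm.isSymm_mul_two_smul_vecMulVec_sub_one_iff [DecidableEq n]
    {A : Matrix n n ℝ} (hA : A.IsSymm) {v : n → ℝ} (hv : v ⬝ᵥ v = 1) :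
    (A * ((2 : ℝ) • vecMulVec v v - 1)).IsSymm ↔ ∃ μ : ℝ, A *ᵥ v = μ • v := by
  rw [← isSymm_vecMulVec_iff hv, Matrix.mul_sub, Matrix.mul_smul, mul_vecMulVec, Matrix.mul_one]
  refine ⟨fun h ↦ ?_, fun h ↦ (h.smul 2).sub hA⟩
  simpa using (h.add hA).smul (2⁻¹ : ℝ)

end Matrices

theorem eq_one_or_exists_eq_two_smul_single_sub_one {d : Fin 3 → ℝ}
    (h : ∀ i, d i = 1 ∨ d i = -1) (hprod : ∏ i, d i = 1) :
    d = 1 ∨ ∃ i, d = (2 : ℝ) • Pi.single i 1 - 1 := by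
  rcases h 0 with h0 | h0 <;> rcases h 1 with h1 | h1 <;> rcases h 2 with h2 | h2 <;>
    norm_num [Fin.prod_univ_three, h0, h1, h2] at hprod <;>
    simp +decide [funext_iff, Fin.forall_fin_succ, Fin.exists_fin_succ, Pi.single_apply,
      h0, h1, h2] <;>
    norm_num

theorem Matrix.IsHermitian.eq_one_or_eq_two_smul_vecMulVec_sub_one
    {R : Matrix (Fin 3) (Fin 3) ℝ} (hR : R.IsHermitian) (hinv : R * R = 1) (hdet : R.det = 1) :
    R = 1 ∨ ∃ v, v ⬝ᵥ v = 1 ∧ R = (2 : ℝ) • vecMulVec v v - 1 := by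
  set U : Matrix (Fin 3) (Fin 3) ℝ := (hR.eigenvectorUnitary : Matrix (Fin 3) (Fin 3) ℝ)
  have hU : U ∈ unitaryGroup (Fin 3) ℝ := hR.eigenvectorUnitary.2
  have hUUt : U * Uᵀ = 1 := by simpa [star_eq_conjTranspose] using mem_unitaryGroup_iff.mp hU
  have hspec : R = U * diagonal hR.eigenvalues * Uᵀ := by
    simpa [star_eq_conjTranspose] using hR.spectral_theorem
  have hprod : ∏ i, hR.eigenvalues i = 1 := by
    simpa [hdet] using hR.det_eq_prod_eigenvalues.symm
  rcases eq_one_or_exists_eq_two_smul_single_sub_one (hR.eigenvalues_eq_one_or_neg_one hinv) hprod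
    with hd | ⟨i, hd⟩
  · left
    rwa [hspec, hd, Pi.one_def, diagonal_one, Matrix.mul_one]
  · right
    refine ⟨Uᵀ i, ?_, ?_⟩
    · simpa [mul_apply, dotProduct, star_eq_conjTranspose] using
        congrFun (congrFun (mem_unitaryGroup_iff'.mp hU) i) i
    · have hD : diagonal ((2 : ℝ) • Pi.single i 1 - 1) =
          (2 : ℝ) • diagonal (Pi.single i 1) - 1 := by
        rw [← diagonal_one, ← diagonal_smul, diagonal_sub]; rfl
      rw [hspec, hd, hD, ← mul_diagonal_single_mul_transpose, Matrix.mul_sub, Matrix.sub_mul,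
        Matrix.mul_smul, Matrix.smul_mul, Matrix.mul_one, hUUt]

theorem psi_eq_zero_iff (M : M3) : psi M = 0 ↔ M.IsSymm := by
  rw [IsSymm.ext_iff, funext_iff]
  simp only [psi, Fin.isValue, cons_val_zero, Pi.zero_apply, div_eq_zero_iff, sub_eq_zero,
    OfNat.ofNat_ne_zero, or_false, cons_val_succ, Fin.forall_fin_succ, cons_val_fin_one,
    forall_const, Fin.succ_zero_eq_one, Fin.succ_one_eq_two, IsEmpty.forall_iff, and_true, true_and]
  grind

theorem skew_mul_skew (v : V3) : skew v * skew v = vecMulVec v v - (v ⬝ᵥ v) • (1 : M3) := by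
  ext i j
  fin_cases i <;> fin_cases j <;>
    simp [skew, mul_apply, Fin.sum_univ_three, vecMulVec_apply, dotProduct, one_apply] <;> ring

theorem Ra_pi {v : V3} (hv : v ⬝ᵥ v = 1) : Ra Real.pi v = (2 : ℝ) • vecMulVec v v - 1 := by
  rw [Ra, Real.sin_pi, Real.cos_pi, skew_mul_skew, hv]
  module

theorem Tmap_zero (u : V3) (R : M3) : Tmap u R 0 = R := by
  simp [Tmap, Ra]

theorem critical_points_of_U_general
    (A : M3) (hA : A.PosDef) (u : V3) (γ : ℝ) (hγ : 0 < γ)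
    (R : M3) (hR : R ∈ SO3) (θ : ℝ) :
    (psi (A * Tmap u R θ) = 0 ∧ γ * θ + 2 * (u ⬝ᵥ psi (A * Tmap u R θ)) = 0) ↔
      (θ = 0 ∧ (R = 1 ∨ ∃ v : V3, IsUnitEigen A v ∧ R = Ra Real.pi v)) := by
  have hAs : A.IsSymm := isHermitian_iff_isSymm.mp hA.isHermitian
  have hRu : R ∈ unitaryGroup (Fin 3) ℝ := by
    simpa [mem_unitaryGroup_iff', star_eq_conjTranspose] using hR.1
  constructor
  · rintro ⟨hψ, hcrit⟩
    obtain rfl : θ = 0 := by simpa [hψ, hγ.ne'] using hcrit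
    rw [Tmap_zero, psi_eq_zero_iff] at hψ
    have hRh : R.IsHermitian :=
      hA.isHermitian_of_isHermitian_mul hRu (isHermitian_iff_isSymm.mpr hψ)
    have hinv : R * R = 1 := by
      nth_rewrite 1 [← (isHermitian_iff_isSymm.mp hRh).eq]
      exact hR.1
    refine ⟨rfl, ?_⟩
    rcases hRh.eq_one_or_eq_two_smul_vecMulVec_sub_one hinv hR.2 with rfl | ⟨v, hv, rfl⟩
    · exact Or.inl rfl
    · exact Or.inr
        ⟨v, ⟨hv, (hAs.isSymm_mul_two_smul_vecMulVec_sub_one_iff hv).mp hψ⟩, (Ra_pi hv).symm⟩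
  · rintro ⟨rfl, hR'⟩
    have hψ : psi (A * Tmap u R 0) = 0 := by
      rw [Tmap_zero, psi_eq_zero_iff]
      rcases hR' with rfl | ⟨v, ⟨hv, hAv⟩, rfl⟩
      · rwa [Matrix.mul_one]
      · rw [Ra_pi hv]
        exact (hAs.isSymm_mul_two_smul_vecMulVec_sub_one_iff hv).mpr hAv
    simp [hψ]

theorem critical_points_of_U
    (A : M3) (hA : A.PosDef) (u : V3) (hu : u ⬝ᵥ u = 1) (γ : ℝ) (hγ : 0 < γ)
    (R : M3) (hR : R ∈ SO3) (θ : ℝ) :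
    (psi (A * Tmap u R θ) = 0 ∧ γ * θ + 2 * (u ⬝ᵥ psi (A * Tmap u R θ)) = 0) ↔
      (θ = 0 ∧ (R = 1 ∨ ∃ v : V3, IsUnitEigen A v ∧ R = Ra Real.pi v)) :=
  critical_points_of_U_general A hA u γ hγ R hR θ
end
end

section
/- Let A be a symmetric real 3×3 matrix with eigenvalues 0 < λ₁ = λ₂ < λ₃ and a corresponding orthonormal basis of eigenvectors v₁, v₂, v₃. Let u = α₁v₁ + α₂v₂ + α₃v₃ with α₁² + α₂² + α₃² = 1 and α₃² = 1 − λ₂/λ₃. Then for every unit eigenvector v of A, Δ(v,u) ≥ λ₁(1 − λ₂/λ₃). -/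
open Matrix

noncomputable section

theorem Delta_lower_bound_case1
    (A : M3) (hA : A.IsSymm) (lam1 lam2 lam3 : ℝ) (v1 v2 v3 : V3)
    (hv1 : A *ᵥ v1 = lam1 • v1) (hv2 : A *ᵥ v2 = lam2 • v2) (hv3 : A *ᵥ v3 = lam3 • v3)
    (hn1 : v1 ⬝ᵥ v1 = 1) (hn2 : v2 ⬝ᵥ v2 = 1) (hn3 : v3 ⬝ᵥ v3 = 1)
    (ho12 : v1 ⬝ᵥ v2 = 0) (ho13 : v1 ⬝ᵥ v3 = 0) (ho23 : v2 ⬝ᵥ v3 = 0)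
    (hpos : 0 < lam1) (heq : lam1 = lam2) (hlt : lam2 < lam3)
    (α1 α2 α3 : ℝ) (hsum : α1 ^ 2 + α2 ^ 2 + α3 ^ 2 = 1) (hα3 : α3 ^ 2 = 1 - lam2 / lam3)
    (u : V3) (hu : u = α1 • v1 + α2 • v2 + α3 • v3) :
    ∀ v : V3, IsUnitEigen A v → Delta A v u ≥ lam1 * (1 - lam2 / lam3) := by
  intro v hv
  obtain ⟨hvn, lam, hlav⟩ := hv
  set Q : M3 := Matrix.of ![v1, v2, v3] with hQdef
  have hQQt : Q * Qᵀ = 1 := by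
    simp only [dotProduct, Fin.sum_univ_three] at hn1 hn2 hn3 ho12 ho13 ho23
    ext i j
    fin_cases i <;> fin_cases j <;>
      simp only [hQdef, Matrix.mul_apply, Matrix.transpose_apply, Fin.sum_univ_three,
        Matrix.of_apply, Matrix.cons_val_zero, Matrix.cons_val_one, Matrix.head_cons,
        Matrix.cons_val_two, Matrix.tail_cons, Matrix.one_apply, Fin.isValue] <;>
      norm_num [Fin.ext_iff] <;> linarith [hn1, hn2, hn3, ho12, ho13, ho23]
  have hQtQ : Qᵀ * Q = 1 := mul_eq_one_comm.mp hQQt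
  -- trace of A
  have hD : A * Qᵀ = Qᵀ * Matrix.diagonal ![lam1, lam2, lam3] := by
    have e1 := fun i => congrFun hv1 i
    have e2 := fun i => congrFun hv2 i
    have e3 := fun i => congrFun hv3 i
    simp only [Matrix.mulVec, dotProduct, Fin.sum_univ_three, Pi.smul_apply,
      smul_eq_mul] at e1 e2 e3
    ext i j
    fin_cases j <;>
      simp only [hQdef, Matrix.mul_apply, Matrix.transpose_apply, Fin.sum_univ_three,
        Matrix.of_apply, Matrix.cons_val_zero, Matrix.cons_val_one, Matrix.head_cons,
        Matrix.cons_val_two, Matrix.tail_cons, Matrix.diagonal_apply, Fin.isValue] <;>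
      norm_num [Fin.ext_iff] <;> [linarith [e1 i]; linarith [e2 i]; linarith [e3 i]]
  have hAeq : A = Qᵀ * Matrix.diagonal ![lam1, lam2, lam3] * Q := by
    calc A = A * (Qᵀ * Q) := by rw [hQtQ, mul_one]
    _ = (A * Qᵀ) * Q := by rw [mul_assoc]
    _ = _ := by rw [hD]
  have htr : A.trace = lam1 + lam2 + lam3 := by
    rw [hAeq, Matrix.trace_mul_comm, ← Matrix.mul_assoc, hQQt, one_mul]
    simp [Matrix.trace, Fin.sum_univ_three]
  -- Parseval
  have hQv : Q *ᵥ v = ![v1 ⬝ᵥ v, v2 ⬝ᵥ v, v3 ⬝ᵥ v] := by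
    funext i
    fin_cases i <;> simp [hQdef, Matrix.mulVec, dotProduct, Fin.sum_univ_three]
  have hpar : (v1 ⬝ᵥ v) ^ 2 + (v2 ⬝ᵥ v) ^ 2 + (v3 ⬝ᵥ v) ^ 2 = 1 := by
    have h1 : (Q *ᵥ v) ⬝ᵥ (Q *ᵥ v) = v ⬝ᵥ v := by
      rw [Matrix.dotProduct_mulVec, ← Matrix.mulVec_transpose, Matrix.mulVec_mulVec,
        hQtQ, Matrix.one_mulVec]
    rw [hQv, hvn] at h1
    simp only [dotProduct, Fin.sum_univ_three, Matrix.cons_val_zero, Matrix.cons_val_one,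
      Matrix.head_cons, Matrix.cons_val_two, Matrix.tail_cons] at h1 ⊢
    linear_combination h1
  -- eigenvalue relations
  have hsym : ∀ (w : V3) (mu : ℝ), A *ᵥ w = mu • w → (lam - mu) * (w ⬝ᵥ v) = 0 := by
    intro w mu hw
    have h1 : w ⬝ᵥ (A *ᵥ v) = lam * (w ⬝ᵥ v) := by
      rw [hlav, dotProduct_smul, smul_eq_mul]
    have h2 : w ⬝ᵥ (A *ᵥ v) = mu * (w ⬝ᵥ v) := by
      rw [Matrix.dotProduct_mulVec, ← Matrix.mulVec_transpose, hA.eq, hw,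
        smul_dotProduct, smul_eq_mul]
    linarith
  have e1 := hsym v1 lam1 hv1
  have e2 := hsym v2 lam2 hv2
  have e3 := hsym v3 lam3 hv3
  -- dot products with u
  have hvu : v ⬝ᵥ u = α1 * (v1 ⬝ᵥ v) + α2 * (v2 ⬝ᵥ v) + α3 * (v3 ⬝ᵥ v) := by
    rw [hu]
    rw [dotProduct_comm]
    simp [add_dotProduct, smul_dotProduct, smul_eq_mul]
  have huu : u ⬝ᵥ u = 1 := by
    rw [hu]
    simp only [add_dotProduct, dotProduct_add, smul_dotProduct,
      dotProduct_smul, smul_eq_mul, hn1, hn2, hn3, ho12, ho13, ho23,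
      dotProduct_comm v2 v1, dotProduct_comm v3 v1, dotProduct_comm v3 v2]
    linear_combination hsum
  have hAu : A *ᵥ u = (α1 * lam1) • v1 + (α2 * lam2) • v2 + (α3 * lam3) • v3 := by
    rw [hu, Matrix.mulVec_add, Matrix.mulVec_add, Matrix.mulVec_smul, Matrix.mulVec_smul,
      Matrix.mulVec_smul, hv1, hv2, hv3, smul_smul, smul_smul, smul_smul]
  have huAu : u ⬝ᵥ (A *ᵥ u) = α1 ^ 2 * lam1 + α2 ^ 2 * lam2 + α3 ^ 2 * lam3 := by
    rw [hAu, hu]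
    simp only [add_dotProduct, dotProduct_add, smul_dotProduct,
      dotProduct_smul, smul_eq_mul, hn1, hn2, hn3, ho12, ho13, ho23,
      dotProduct_comm v2 v1, dotProduct_comm v3 v1, dotProduct_comm v3 v2]
    ring
  -- compute Delta
  have hvAv : v ⬝ᵥ (A *ᵥ v) = lam := by
    rw [hlav, dotProduct_smul, smul_eq_mul, hvn, mul_one]
  have hP : Matrix.vecMulVec v v *ᵥ u = (v ⬝ᵥ u) • v := by
    funext i
    simp only [Matrix.mulVec, Matrix.vecMulVec_apply, dotProduct, Fin.sum_univ_three,
      Pi.smul_apply, smul_eq_mul]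
    ring
  have hDelta : Delta A v u =
      A.trace * (u ⬝ᵥ u) - u ⬝ᵥ (A *ᵥ u) - 2 * lam * ((u ⬝ᵥ u) - (v ⬝ᵥ u) ^ 2) := by
    unfold Delta
    simp only [Matrix.sub_mulVec, Matrix.smul_mulVec, Matrix.one_mulVec, hP,
      dotProduct_sub, dotProduct_smul, smul_eq_mul, hvAv]
    rw [dotProduct_comm u v]
    ring
  -- final arithmetic
  set c1 := v1 ⬝ᵥ v with hc1
  set c2 := v2 ⬝ᵥ v with hc2
  set c3 := v3 ⬝ᵥ v with hc3
  have hlam3pos : 0 < lam3 := by linarith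
  have hlam3ne : lam3 ≠ 0 := ne_of_gt hlam3pos
  have hs : α1 ^ 2 + α2 ^ 2 = lam2 / lam3 := by
    have := hα3; linarith [hsum]
  rw [hDelta, htr, huu, huAu, hvu]
  clear_value c1 c2 c3
  clear hDelta hP hvAv hAu hQv hD hAeq hQQt hQtQ hQdef hsym hlav hu hvn huu huAu hvu htr
    hv1 hv2 hv3 hn1 hn2 hn3 ho12 ho13 ho23 hA hc1 hc2 hc3
  clear Q
  clear u v v1 v2 v3 A
  set s := lam2 / lam3 with hsdef
  by_cases hcase : lam = lam3
  · -- v is (up to sign) v3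
    rw [hcase] at e1 e2
    have hc1z : c1 = 0 := by
      rcases mul_eq_zero.mp e1 with h | h
      · exfalso; linarith
      · exact h
    have hc2z : c2 = 0 := by
      rcases mul_eq_zero.mp e2 with h | h
      · exfalso; linarith
      · exact h
    have hc3sq : c3 ^ 2 = 1 := by
      rw [hc1z, hc2z] at hpar; linarith [hpar]
    rw [hc1z, hc2z, hcase]
    have hkey : lam2 = s * lam3 := by rw [hsdef]; field_simp
    have hgoal : (lam1 + lam2 + lam3) * 1 - (α1 ^ 2 * lam1 + α2 ^ 2 * lam2 + α3 ^ 2 * lam3)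
        - 2 * lam3 * (1 - (α1 * 0 + α2 * 0 + α3 * c3) ^ 2) = lam1 * (1 - s) := by
      linear_combination (2 * lam3 * α3 ^ 2) * hc3sq + (s - α1 ^ 2) * heq - lam2 * hs
        + lam3 * hα3 + hkey
    exact ge_of_eq hgoal
  · -- v is in the eigenspace of lam1 = lam2
    have hc3z : c3 = 0 := by
      rcases mul_eq_zero.mp e3 with h | h
      · exact absurd (by linarith : lam = lam3) hcase
      · exact h
    have hc12 : c1 ^ 2 + c2 ^ 2 = 1 := by
      rw [hc3z] at hpar; linarith [hpar]
    have hlamval : lam = lam2 := by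
      by_contra hne
      have h1 : c1 = 0 := by
        rcases mul_eq_zero.mp e1 with h | h
        · exfalso; apply hne; linarith
        · exact h
      have h2 : c2 = 0 := by
        rcases mul_eq_zero.mp e2 with h | h
        · exfalso; exact hne (by linarith)
        · exact h
      rw [h1, h2] at hc12; norm_num at hc12
    rw [hc3z, hlamval]
    have hkey : lam2 = s * lam3 := by rw [hsdef]; field_simp
    have hpos2 : 0 < lam2 := by linarith
    have hgoal : (lam1 + lam2 + lam3) * 1 - (α1 ^ 2 * lam1 + α2 ^ 2 * lam2 + α3 ^ 2 * lam3)
        - 2 * lam2 * (1 - (α1 * c1 + α2 * c2 + α3 * 0) ^ 2) - lam1 * (1 - s)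
        = 2 * lam2 * (α1 * c1 + α2 * c2) ^ 2 := by
      linear_combination (s - α1 ^ 2) * heq - lam2 * hs - lam3 * hα3 - hkey
    nlinarith [hgoal, mul_nonneg hpos2.le (sq_nonneg (α1 * c1 + α2 * c2))]
end
end

section
/- Let A be a symmetric real 3×3 matrix with eigenvalues 0 < λ₁ ≤ λ₂ < λ₃ satisfying λ₂ ≥ λ₁λ₃/(λ₃ − λ₁), and a corresponding orthonormal basis of eigenvectors v₁, v₂, v₃. Let u = α₂v₂ + α₃v₃ with α₂² = λ₂/(λ₂ + λ₃) and α₃² = λ₃/(λ₂ + λ₃). Then for every unit eigenvector v of A, Δ(v,u) ≥ λ₁. -/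
open Matrix

noncomputable section

/-!
For a unit eigenvector `v` with eigenvalue `λ` and a unit vector `u`,
`Δ(v,u) = tr A - uᵀAu - 2λ(1 - (v·u)²)`, and the weights `αᵢ` make
`tr A - uᵀAu = λ₁ + 2λ₂λ₃/(λ₂+λ₃)`. The case hypothesis says `λ₁ ≤ λ₂λ₃/(λ₂+λ₃)` and forces
`λ₁ < λ₂`, so the spectrum is simple and `v = ±vᵢ`. For `v = ±v₁` we have `v ⟂ u` and the bound is
the case hypothesis; for `v = ±v₂` or `±v₃`, `λ(1 - (v·u)²) = λ₂λ₃/(λ₂+λ₃)`, so `Δ = λ₁`.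
-/

section OrthonormalEigenbasis

variable {n : Type*} [Fintype n]

theorem dotProduct_eq_zero_of_eigenvalue_ne {A : Matrix n n ℝ} (hA : A.IsSymm)
    {w v : n → ℝ} {μ lam : ℝ} (hw : A *ᵥ w = μ • w) (hv : A *ᵥ v = lam • v) (hne : μ ≠ lam) :
    w ⬝ᵥ v = 0 := by
  have h : μ * (w ⬝ᵥ v) = lam * (w ⬝ᵥ v) := by
    calc μ * (w ⬝ᵥ v) = (A *ᵥ w) ⬝ᵥ v := by rw [hw, smul_dotProduct, smul_eq_mul]
      _ = w ⬝ᵥ (A *ᵥ v) := by rw [dotProduct_mulVec, ← mulVec_transpose, hA.eq]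
      _ = lam * (w ⬝ᵥ v) := by rw [hv, dotProduct_smul, smul_eq_mul]
  exact (mul_eq_mul_right_iff.mp h).resolve_left hne

variable [DecidableEq n]

theorem of_mul_transpose_eq_one_of_orthonormal {b : n → n → ℝ}
    (hb : ∀ i j, b i ⬝ᵥ b j = if i = j then 1 else 0) : of b * (of b)ᵀ = 1 := by
  ext i j
  rw [mul_apply', one_apply]
  exact hb i j

theorem sum_sq_dotProduct_of_mul_transpose_eq_one {Q : Matrix n n ℝ} (hQ : Q * Qᵀ = 1)
    (x : n → ℝ) : ∑ i, (Q i ⬝ᵥ x) ^ 2 = x ⬝ᵥ x := by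
  calc ∑ i, (Q i ⬝ᵥ x) ^ 2 = (Q *ᵥ x) ⬝ᵥ (Q *ᵥ x) := by simp only [dotProduct, mulVec, sq]
    _ = x ⬝ᵥ ((Qᵀ * Q) *ᵥ x) := by
      rw [← mulVec_mulVec, dotProduct_mulVec x, vecMul_transpose]
    _ = x ⬝ᵥ x := by rw [mul_eq_one_comm.mp hQ, one_mulVec]

theorem trace_eq_sum_of_mul_transpose_eq_one {Q : Matrix n n ℝ} (hQ : Q * Qᵀ = 1)
    {A : Matrix n n ℝ} {l : n → ℝ} (hQA : ∀ i, A *ᵥ Q i = l i • Q i) :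
    A.trace = ∑ i, l i := by
  have hAQ : A * Qᵀ = Qᵀ * diagonal l := by
    ext j i
    have hcol := congrFun (hQA i) j
    rw [Pi.smul_apply, smul_eq_mul] at hcol
    rw [mul_diagonal, transpose_apply, mul_comm (Q i j), ← hcol]
    rfl
  calc A.trace = (Q * (A * Qᵀ)).trace := by
        rw [trace_mul_comm, Matrix.mul_assoc, mul_eq_one_comm.mp hQ, Matrix.mul_one]
    _ = ∑ i, l i := by rw [hAQ, ← Matrix.mul_assoc, hQ, Matrix.one_mul, trace_diagonal]

theorem exists_eq_eigenvalue_of_orthonormal_eigenbasis {A : Matrix n n ℝ} (hA : A.IsSymm)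
    {Q : Matrix n n ℝ} (hQ : Q * Qᵀ = 1) {l : n → ℝ} (hl : Function.Injective l)
    (hQA : ∀ i, A *ᵥ Q i = l i • Q i)
    {v : n → ℝ} {lam : ℝ} (hv : v ⬝ᵥ v = 1) (hAv : A *ᵥ v = lam • v) :
    ∃ i, lam = l i ∧ (Q i ⬝ᵥ v) ^ 2 = 1 ∧ ∀ j, j ≠ i → Q j ⬝ᵥ v = 0 := by
  have hparseval := sum_sq_dotProduct_of_mul_transpose_eq_one hQ v
  obtain ⟨i, hi⟩ : ∃ i, Q i ⬝ᵥ v ≠ 0 := by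
    by_contra! h
    simp [h, hv] at hparseval
  have hli : lam = l i :=
    (not_imp_comm.mp (dotProduct_eq_zero_of_eigenvalue_ne hA (hQA i) hAv) hi).symm
  have hj : ∀ j, j ≠ i → Q j ⬝ᵥ v = 0 := fun j hji =>
    dotProduct_eq_zero_of_eigenvalue_ne hA (hQA j) hAv (hli ▸ hl.ne hji)
  refine ⟨i, hli, ?_, hj⟩
  rw [← hv, ← hparseval, Finset.sum_eq_single i (fun j _ hji => by rw [hj j hji, sq, zero_mul])
    (by simp)]

end OrthonormalEigenbasis

theorem Delta_eq_of_eigen {A : M3} {v : V3} {lam : ℝ} (hv : v ⬝ᵥ v = 1)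
    (hAv : A *ᵥ v = lam • v) (u : V3) :
    Delta A v u = A.trace * (u ⬝ᵥ u) - u ⬝ᵥ (A *ᵥ u) - 2 * lam * (u ⬝ᵥ u - (v ⬝ᵥ u) ^ 2) := by
  have hvAv : v ⬝ᵥ (A *ᵥ v) = lam := by rw [hAv, dotProduct_smul, hv, smul_eq_mul, mul_one]
  simp only [Delta, sub_mulVec, smul_mulVec, one_mulVec, vecMulVec_mulVec, dotProduct_sub,
    dotProduct_smul, smul_eq_mul, op_smul_eq_mul, hvAv, dotProduct_comm u v]
  ring

section OrthonormalEigenbasis3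

variable {A : M3} {v1 v2 v3 : V3} {lam1 lam2 lam3 : ℝ}

theorem of_vecCons_mul_transpose_eq_one (hn1 : v1 ⬝ᵥ v1 = 1) (hn2 : v2 ⬝ᵥ v2 = 1)
    (hn3 : v3 ⬝ᵥ v3 = 1) (ho12 : v1 ⬝ᵥ v2 = 0) (ho13 : v1 ⬝ᵥ v3 = 0) (ho23 : v2 ⬝ᵥ v3 = 0) :
    of ![v1, v2, v3] * (of ![v1, v2, v3])ᵀ = 1 :=
  of_mul_transpose_eq_one_of_orthonormal fun i j => by
    fin_cases i <;> fin_cases j <;> simp [hn1, hn2, hn3, ho12, ho13, ho23, dotProduct_comm]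

theorem trace_eq_of_orthonormal_eigenvectors
    (hv1 : A *ᵥ v1 = lam1 • v1) (hv2 : A *ᵥ v2 = lam2 • v2) (hv3 : A *ᵥ v3 = lam3 • v3)
    (hn1 : v1 ⬝ᵥ v1 = 1) (hn2 : v2 ⬝ᵥ v2 = 1) (hn3 : v3 ⬝ᵥ v3 = 1)
    (ho12 : v1 ⬝ᵥ v2 = 0) (ho13 : v1 ⬝ᵥ v3 = 0) (ho23 : v2 ⬝ᵥ v3 = 0) :
    A.trace = lam1 + lam2 + lam3 := by
  rw [trace_eq_sum_of_mul_transpose_eq_one (l := ![lam1, lam2, lam3])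
    (of_vecCons_mul_transpose_eq_one hn1 hn2 hn3 ho12 ho13 ho23)
    (fun i => by fin_cases i <;> assumption), Fin.sum_univ_three]
  rfl

theorem eigenvalue_cases_of_orthonormal_eigenvectors (hA : A.IsSymm)
    (hv1 : A *ᵥ v1 = lam1 • v1) (hv2 : A *ᵥ v2 = lam2 • v2) (hv3 : A *ᵥ v3 = lam3 • v3)
    (hn1 : v1 ⬝ᵥ v1 = 1) (hn2 : v2 ⬝ᵥ v2 = 1) (hn3 : v3 ⬝ᵥ v3 = 1)
    (ho12 : v1 ⬝ᵥ v2 = 0) (ho13 : v1 ⬝ᵥ v3 = 0) (ho23 : v2 ⬝ᵥ v3 = 0)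
    (h12 : lam1 < lam2) (h23 : lam2 < lam3) {v : V3} {lam : ℝ} (hv : v ⬝ᵥ v = 1)
    (hAv : A *ᵥ v = lam • v) :
    (lam = lam1 ∧ v2 ⬝ᵥ v = 0 ∧ v3 ⬝ᵥ v = 0) ∨ (lam = lam2 ∧ (v2 ⬝ᵥ v) ^ 2 = 1 ∧ v3 ⬝ᵥ v = 0) ∨
      (lam = lam3 ∧ v2 ⬝ᵥ v = 0 ∧ (v3 ⬝ᵥ v) ^ 2 = 1) := by
  have hl : Function.Injective ![lam1, lam2, lam3] := by
    intro i j h; fin_cases i <;> fin_cases j <;> simp at h ⊢ <;> linarith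
  obtain ⟨i, hlam, hvi, hvj⟩ := exists_eq_eigenvalue_of_orthonormal_eigenbasis hA
    (of_vecCons_mul_transpose_eq_one hn1 hn2 hn3 ho12 ho13 ho23) hl
    (fun i => by fin_cases i <;> assumption) hv hAv
  fin_cases i
  · exact Or.inl ⟨hlam, hvj 1 (by decide), hvj 2 (by decide)⟩
  · exact Or.inr (Or.inl ⟨hlam, hvi, hvj 2 (by decide)⟩)
  · exact Or.inr (Or.inr ⟨hlam, hvj 1 (by decide), hvi⟩)

end OrthonormalEigenbasis3

theorem Delta_add_smul_eq {A : M3} {v v2 v3 : V3} {lam lam1 lam2 lam3 α2 α3 : ℝ}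
    (htr : A.trace = lam1 + lam2 + lam3) (hv2 : A *ᵥ v2 = lam2 • v2) (hv3 : A *ᵥ v3 = lam3 • v3)
    (hn2 : v2 ⬝ᵥ v2 = 1) (hn3 : v3 ⬝ᵥ v3 = 1) (ho23 : v2 ⬝ᵥ v3 = 0) (hs : lam2 + lam3 ≠ 0)
    (hα2 : α2 ^ 2 = lam2 / (lam2 + lam3)) (hα3 : α3 ^ 2 = lam3 / (lam2 + lam3))
    (hv : v ⬝ᵥ v = 1) (hAv : A *ᵥ v = lam • v) :
    Delta A v (α2 • v2 + α3 • v3) = lam1 + 2 * (lam2 * lam3 / (lam2 + lam3)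
      - lam * (1 - (α2 * (v2 ⬝ᵥ v) + α3 * (v3 ⬝ᵥ v)) ^ 2)) := by
  have ho32 : v3 ⬝ᵥ v2 = 0 := by rwa [dotProduct_comm]
  have huu : (α2 • v2 + α3 • v3) ⬝ᵥ (α2 • v2 + α3 • v3) = α2 ^ 2 + α3 ^ 2 := by
    simp only [add_dotProduct, dotProduct_add, smul_dotProduct, dotProduct_smul, smul_eq_mul, hn2,
      hn3, ho23, ho32]
    ring
  have huAu : (α2 • v2 + α3 • v3) ⬝ᵥ (A *ᵥ (α2 • v2 + α3 • v3)) =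
      α2 ^ 2 * lam2 + α3 ^ 2 * lam3 := by
    simp only [mulVec_add, mulVec_smul, hv2, hv3, add_dotProduct, dotProduct_add, smul_dotProduct,
      dotProduct_smul, smul_eq_mul, hn2, hn3, ho23, ho32]
    ring
  have hvu : v ⬝ᵥ (α2 • v2 + α3 • v3) = α2 * (v2 ⬝ᵥ v) + α3 * (v3 ⬝ᵥ v) := by
    simp only [dotProduct_add, dotProduct_smul, smul_eq_mul, dotProduct_comm v v2,
      dotProduct_comm v v3]
  rw [Delta_eq_of_eigen hv hAv, htr, huu, huAu, hvu, hα2, hα3]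
  field_simp
  ring

theorem Delta_lower_bound_case2
    (A : M3) (hA : A.IsSymm) (lam1 lam2 lam3 : ℝ) (v1 v2 v3 : V3)
    (hv1 : A *ᵥ v1 = lam1 • v1) (hv2 : A *ᵥ v2 = lam2 • v2) (hv3 : A *ᵥ v3 = lam3 • v3)
    (hn1 : v1 ⬝ᵥ v1 = 1) (hn2 : v2 ⬝ᵥ v2 = 1) (hn3 : v3 ⬝ᵥ v3 = 1)
    (ho12 : v1 ⬝ᵥ v2 = 0) (ho13 : v1 ⬝ᵥ v3 = 0) (ho23 : v2 ⬝ᵥ v3 = 0)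
    (hpos : 0 < lam1) (hle : lam1 ≤ lam2) (hlt : lam2 < lam3)
    (hcase : lam2 ≥ lam1 * lam3 / (lam3 - lam1))
    (α2 α3 : ℝ) (hα2 : α2 ^ 2 = lam2 / (lam2 + lam3)) (hα3 : α3 ^ 2 = lam3 / (lam2 + lam3))
    (u : V3) (hu : u = α2 • v2 + α3 • v3) :
    ∀ v : V3, IsUnitEigen A v → Delta A v u ≥ lam1 := by
  rintro v ⟨hv, lam, hAv⟩
  have hs : 0 < lam2 + lam3 := by linarith
  have hgap : lam1 ≤ lam2 * lam3 / (lam2 + lam3) := by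
    rw [ge_iff_le, div_le_iff₀ (by linarith)] at hcase
    rw [le_div_iff₀ hs]
    linarith
  have h12 : lam1 < lam2 := by
    rw [le_div_iff₀ hs] at hgap
    nlinarith
  have htr := trace_eq_of_orthonormal_eigenvectors hv1 hv2 hv3 hn1 hn2 hn3 ho12 ho13 ho23
  rw [hu, Delta_add_smul_eq htr hv2 hv3 hn2 hn3 ho23 hs.ne' hα2 hα3 hv hAv, ge_iff_le,
    le_add_iff_nonneg_right, mul_nonneg_iff_of_pos_left two_pos, sub_nonneg]
  rcases eigenvalue_cases_of_orthonormal_eigenvectors hA hv1 hv2 hv3 hn1 hn2 hn3 ho12 ho13 ho23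
    h12 hlt hv hAv with ⟨rfl, h2, h3⟩ | ⟨rfl, h2, h3⟩ | ⟨rfl, h2, h3⟩
  · simpa [h2, h3] using hgap
  · rw [h3, mul_zero, add_zero, mul_pow, hα2, h2]
    exact le_of_eq (by field_simp; ring)
  · rw [h2, mul_zero, zero_add, mul_pow, hα3, h3]
    exact le_of_eq (by field_simp; ring)
end
end

section
/- Let A be a symmetric real 3×3 matrix with eigenvalues 0 < λ₁ < λ₂ < λ₃ satisfying λ₂ < λ₁λ₃/(λ₃ − λ₁), and a corresponding orthonormal basis of eigenvectors v₁, v₂, v₃. Let u = α₁v₁ + α₂v₂ + α₃v₃ where, for each i and with {i,j,k} = {1,2,3}, αᵢ² = 1 − 2λⱼλₖ/(λ₁λ₂ + λ₁λ₃ + λ₂λ₃). Then for every unit eigenvector v of A, Δ(v,u) ≥ 2λ₁λ₂λ₃/(λ₁λ₂ + λ₁λ₃ + λ₂λ₃). -/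
open Matrix

noncomputable section

/-! In the orthonormal eigenframe `v₁, v₂, v₃`, i.e. after conjugating by the orthogonal matrix `Q`
with rows `vᵢ`, `A` becomes `diag(λ₁, λ₂, λ₃)`, `u` becomes `α = (α₁, α₂, α₃)`, and `Δ` is unchanged.
The eigenvalues being distinct, a unit eigenvector of the diagonal matrix is `±eᵢ`, for which
`Δ = (λ₁ + λ₂ + λ₃)‖α‖² - Σⱼ λⱼαⱼ² - 2λᵢ(‖α‖² - αᵢ²)`. The prescribed `αⱼ²` give `‖α‖² = 1` and make
this equal to `2λ₁λ₂λ₃/(λ₁λ₂ + λ₁λ₃ + λ₂λ₃)` for each `i`: the bound is attained. -/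

section

variable {n R : Type*} [Fintype n] [DecidableEq n] [CommRing R] {Q : Matrix n n R}

lemma mulVec_dotProduct_mulVec (hQ : Qᵀ * Q = 1) (x y : n → R) :
    Q *ᵥ x ⬝ᵥ Q *ᵥ y = x ⬝ᵥ y := by
  rw [← dotProduct_transpose_mulVec, mulVec_mulVec, hQ, one_mulVec, dotProduct_comm]

lemma trace_transpose_mul_mul (hQ : Qᵀ * Q = 1) (D : Matrix n n R) :
    (Qᵀ * D * Q).trace = D.trace := by
  rw [trace_mul_cycle, mul_eq_one_comm.mp hQ, one_mul]

lemma eq_transpose_mul_diagonal_mul {A : Matrix n n R} {d : n → R} (hQ : Qᵀ * Q = 1)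
    (hAQ : ∀ i, A *ᵥ Q i = d i • Q i) : A = Qᵀ * diagonal d * Q := by
  have hcols : A * Qᵀ = Qᵀ * diagonal d := by
    ext k i
    have hki := congrFun (hAQ i) k
    rw [Pi.smul_apply, smul_eq_mul] at hki
    rw [mul_diagonal, transpose_apply, mul_comm, ← hki]
    rfl
  rw [← hcols, Matrix.mul_assoc, hQ, Matrix.mul_one]

lemma eq_single_of_diagonal_mulVec_eq_smul [NoZeroDivisors R] {d c : n → R} {μ : R}
    (hd : Function.Injective d) (hc : diagonal d *ᵥ c = μ • c) {i : n} (hi : c i ≠ 0) :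
    c = Pi.single i (c i) := by
  have hcoord (j : n) : (d j - μ) * c j = 0 := by
    have := congrFun hc j
    rw [mulVec_diagonal, Pi.smul_apply, smul_eq_mul] at this
    rw [sub_mul, this, sub_self]
  have hμ : d i = μ := sub_eq_zero.mp ((mul_eq_zero.mp (hcoord i)).resolve_right hi)
  ext j
  rcases eq_or_ne j i with rfl | hji
  · simp
  · rw [Pi.single_eq_of_ne hji]
    exact (mul_eq_zero.mp (hcoord j)).resolve_left (sub_ne_zero.mpr (hμ ▸ hd.ne hji))

end

lemma transpose_mul_self_of_orthonormal {v1 v2 v3 : V3}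
    (hn1 : v1 ⬝ᵥ v1 = 1) (hn2 : v2 ⬝ᵥ v2 = 1) (hn3 : v3 ⬝ᵥ v3 = 1)
    (ho12 : v1 ⬝ᵥ v2 = 0) (ho13 : v1 ⬝ᵥ v3 = 0) (ho23 : v2 ⬝ᵥ v3 = 0) :
    (of ![v1, v2, v3])ᵀ * of ![v1, v2, v3] = 1 := by
  refine mul_eq_one_comm.mp (ext fun i j => ?_)
  change ![v1, v2, v3] i ⬝ᵥ ![v1, v2, v3] j = (1 : M3) i j
  fin_cases i <;> fin_cases j <;> simp [dotProduct_comm, *]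

lemma Delta_eq (A : M3) (v u : V3) :
    Delta A v u = A.trace * (u ⬝ᵥ u) - u ⬝ᵥ A *ᵥ u
      - 2 * (v ⬝ᵥ A *ᵥ v) * (u ⬝ᵥ u - (v ⬝ᵥ u) ^ 2) := by
  simp only [Delta, sub_mulVec, smul_mulVec, one_mulVec, vecMulVec_mulVec, dotProduct_sub,
    dotProduct_smul, smul_eq_mul, op_smul_eq_smul, dotProduct_comm u v]
  ring

lemma Delta_transpose_mul_mul {Q : M3} (hQ : Qᵀ * Q = 1) (D : M3) (v u : V3) :
    Delta (Qᵀ * D * Q) v u = Delta D (Q *ᵥ v) (Q *ᵥ u) := by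
  simp only [Delta_eq, trace_transpose_mul_mul hQ, ← mulVec_mulVec, dotProduct_transpose_mulVec,
    mulVec_dotProduct_mulVec hQ, dotProduct_comm (D *ᵥ _)]

lemma IsUnitEigen.mulVec_of_transpose_mul_mul {Q D : M3} (hQ : Qᵀ * Q = 1) {v : V3}
    (hv : IsUnitEigen (Qᵀ * D * Q) v) : IsUnitEigen D (Q *ᵥ v) := by
  obtain ⟨hn, μ, hμ⟩ := hv
  refine ⟨(mulVec_dotProduct_mulVec hQ v v).trans hn, μ, ?_⟩
  rw [← mulVec_smul, ← hμ, mulVec_mulVec, mulVec_mulVec, ← Matrix.mul_assoc, ← Matrix.mul_assoc,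
    mul_eq_one_comm.mp hQ, Matrix.one_mul]

lemma Delta_diagonal_single (d w : V3) (i : Fin 3) {s : ℝ} (hs : s ^ 2 = 1) :
    Delta (diagonal d) (Pi.single i s) w = (∑ j, d j) * (w ⬝ᵥ w) - ∑ j, d j * w j ^ 2
      - 2 * d i * (w ⬝ᵥ w - w i ^ 2) := by
  rw [Delta_eq, trace_diagonal]
  have hquad : w ⬝ᵥ diagonal d *ᵥ w = ∑ j, d j * w j ^ 2 := by
    simp only [dotProduct, mulVec_diagonal]
    exact Finset.sum_congr rfl fun j _ => by ring
  simp only [diagonal_mulVec_single, single_dotProduct, Pi.single_eq_same, hquad]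
  linear_combination (2 * d i * w i ^ 2 * (s ^ 2 + 1) - 2 * d i * (w ⬝ᵥ w)) * hs

lemma IsUnitEigen.exists_eq_single_of_diagonal {d c : V3} (hd : Function.Injective d)
    (hc : IsUnitEigen (diagonal d) c) : ∃ i, c i ^ 2 = 1 ∧ c = Pi.single i (c i) := by
  obtain ⟨hn, μ, hμ⟩ := hc
  obtain ⟨i, hi⟩ : ∃ i, c i ≠ 0 := by
    by_contra! h
    simp [funext h] at hn
  have hsingle := eq_single_of_diagonal_mulVec_eq_smul hd hμ hi
  refine ⟨i, ?_, hsingle⟩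
  rw [hsingle, single_dotProduct, Pi.single_eq_same] at hn
  linear_combination hn

theorem Delta_lower_bound_case3_general
    (A : M3) (lam1 lam2 lam3 : ℝ) (v1 v2 v3 : V3)
    (hv1 : A *ᵥ v1 = lam1 • v1) (hv2 : A *ᵥ v2 = lam2 • v2) (hv3 : A *ᵥ v3 = lam3 • v3)
    (hn1 : v1 ⬝ᵥ v1 = 1) (hn2 : v2 ⬝ᵥ v2 = 1) (hn3 : v3 ⬝ᵥ v3 = 1)
    (ho12 : v1 ⬝ᵥ v2 = 0) (ho13 : v1 ⬝ᵥ v3 = 0) (ho23 : v2 ⬝ᵥ v3 = 0)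
    (hpos : 0 < lam1) (hlt12 : lam1 < lam2) (hlt23 : lam2 < lam3)
    (α1 α2 α3 : ℝ)
    (hα1 : α1 ^ 2 = 1 - 2 * lam2 * lam3 / (lam1 * lam2 + lam1 * lam3 + lam2 * lam3))
    (hα2 : α2 ^ 2 = 1 - 2 * lam1 * lam3 / (lam1 * lam2 + lam1 * lam3 + lam2 * lam3))
    (hα3 : α3 ^ 2 = 1 - 2 * lam1 * lam2 / (lam1 * lam2 + lam1 * lam3 + lam2 * lam3))
    (u : V3) (hu : u = α1 • v1 + α2 • v2 + α3 • v3) :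
    ∀ v : V3, IsUnitEigen A v →
      Delta A v u ≥ 2 * lam1 * lam2 * lam3 / (lam1 * lam2 + lam1 * lam3 + lam2 * lam3) := by
  intro v hv
  set Q : M3 := of ![v1, v2, v3]
  have hQ : Qᵀ * Q = 1 := transpose_mul_self_of_orthonormal hn1 hn2 hn3 ho12 ho13 ho23
  have hA : A = Qᵀ * diagonal ![lam1, lam2, lam3] * Q :=
    eq_transpose_mul_diagonal_mul hQ fun i => by fin_cases i <;> assumption
  have hQu : Q *ᵥ u = ![α1, α2, α3] := by
    have : u = Qᵀ *ᵥ ![α1, α2, α3] := by simp [hu, Q, mulVec_transpose, add_assoc]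
    rw [this, mulVec_mulVec, mul_eq_one_comm.mp hQ, one_mulVec]
  have hinj : Function.Injective ![lam1, lam2, lam3] := by
    intro i j h; fin_cases i <;> fin_cases j <;> simp at h ⊢ <;> linarith
  obtain ⟨i, hsq, hsingle⟩ :=
    ((hA ▸ hv).mulVec_of_transpose_mul_mul hQ).exists_eq_single_of_diagonal hinj
  have hS : lam1 * lam2 + lam1 * lam3 + lam2 * lam3 ≠ 0 := by nlinarith
  have hunit : ![α1, α2, α3] ⬝ᵥ ![α1, α2, α3] = 1 := by
    simp only [cons_dotProduct_cons, dotProduct_of_isEmpty]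
    linear_combination hα1 + hα2 + hα3 - 2 * div_self hS
  rw [hA, Delta_transpose_mul_mul hQ, hsingle, hQu, Delta_diagonal_single _ _ _ hsq, hunit]
  refine ge_of_eq ?_
  fin_cases i <;>
    simp only [Fin.zero_eta, Fin.mk_one, Fin.reduceFinMk, Fin.sum_univ_three, cons_val_zero,
      cons_val_one, cons_val, mul_one, hα1, hα2, hα3, sub_sub_cancel] <;>
    field_simp <;> ring

theorem Delta_lower_bound_case3
    (A : M3) (hA : A.IsSymm) (lam1 lam2 lam3 : ℝ) (v1 v2 v3 : V3)
    (hv1 : A *ᵥ v1 = lam1 • v1) (hv2 : A *ᵥ v2 = lam2 • v2) (hv3 : A *ᵥ v3 = lam3 • v3)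
    (hn1 : v1 ⬝ᵥ v1 = 1) (hn2 : v2 ⬝ᵥ v2 = 1) (hn3 : v3 ⬝ᵥ v3 = 1)
    (ho12 : v1 ⬝ᵥ v2 = 0) (ho13 : v1 ⬝ᵥ v3 = 0) (ho23 : v2 ⬝ᵥ v3 = 0)
    (hpos : 0 < lam1) (hlt12 : lam1 < lam2) (hlt23 : lam2 < lam3)
    (hcase : lam2 < lam1 * lam3 / (lam3 - lam1))
    (α1 α2 α3 : ℝ)
    (hα1 : α1 ^ 2 = 1 - 2 * lam2 * lam3 / (lam1 * lam2 + lam1 * lam3 + lam2 * lam3))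
    (hα2 : α2 ^ 2 = 1 - 2 * lam1 * lam3 / (lam1 * lam2 + lam1 * lam3 + lam2 * lam3))
    (hα3 : α3 ^ 2 = 1 - 2 * lam1 * lam2 / (lam1 * lam2 + lam1 * lam3 + lam2 * lam3))
    (u : V3) (hu : u = α1 • v1 + α2 • v2 + α3 • v3) :
    ∀ v : V3, IsUnitEigen A v →
      Delta A v u ≥ 2 * lam1 * lam2 * lam3 / (lam1 * lam2 + lam1 * lam3 + lam2 * lam3) :=
  Delta_lower_bound_case3_general A lam1 lam2 lam3 v1 v2 v3 hv1 hv2 hv3 hn1 hn2 hn3 ho12 ho13 ho23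
    hpos hlt12 hlt23 α1 α2 α3 hα1 hα2 hα3 u hu
end
end

section
/- Let A be a symmetric positive definite real 3×3 matrix and Ā := (1/2)(tr(A)I₃ − A), with smallest and largest eigenvalues λ_m^Ā and λ_M^Ā. Then for every T ∈ SO(3): λ_m^Ā · tr(I₃ − T) ≤ tr(A(I₃ − T)) ≤ λ_M^Ā · tr(I₃ − T). -/
open Matrix

noncomputable section

namespace TBaux

theorem adj3 (T : M3) : adjugate T = T*T - T.trace • T + ((T.trace^2 - (T*T).trace)/2) • 1 := by
  ext i j
  fin_cases i <;> fin_cases j <;>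
    simp [adjugate_fin_three, mul_apply, Fin.sum_univ_succ, trace_fin_three, Matrix.one_apply] <;> ring

theorem so3_facts (T : M3) (hT : T ∈ SO3) :
    Tᵀ = T*T - T.trace • T + T.trace • 1 ∧ (T*T).trace = T.trace^2 - 2*T.trace := by
  obtain ⟨h1, h2⟩ := hT
  have hTT : T * Tᵀ = 1 := mul_eq_one_comm.mp h1
  have hadj : adjugate T = Tᵀ := by
    calc adjugate T = adjugate T * (T * Tᵀ) := by rw [hTT, mul_one]
    _ = (adjugate T * T) * Tᵀ := by rw [mul_assoc]
    _ = Tᵀ := by rw [adjugate_mul, h2, one_smul, one_mul]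
  have key : Tᵀ = T*T - T.trace • T + ((T.trace^2 - (T*T).trace)/2) • 1 := by
    rw [← hadj, adj3]
  have htr : T.trace = (T*T).trace - T.trace*T.trace + ((T.trace^2 - (T*T).trace)/2)*3 := by
    have := congrArg Matrix.trace key
    simpa [trace_transpose, trace_sub, trace_add, trace_smul, trace_one, Matrix.trace_smul,
      smul_eq_mul] using this
  have hs : (T.trace^2 - (T*T).trace)/2 = T.trace := by nlinarith [sq_nonneg T.trace]
  constructor
  · rw [key, hs]
  · nlinarith [sq_nonneg T.trace]

theorem axis_exists (T : M3) (hT : T ∈ SO3) :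
    ∃ u : V3, u ⬝ᵥ u = 1 ∧ T *ᵥ u = u ∧ Tᵀ *ᵥ u = u := by
  obtain ⟨h1, h2⟩ := hT
  have hdet : (T - 1).det = 0 := by
    have e1 : (T - 1)ᵀ = Tᵀ * (1 - T) := by
      rw [Matrix.mul_sub, mul_one, h1, transpose_sub, transpose_one]
    have : (T - 1).det = Tᵀ.det * (1 - T).det := by
      rw [← det_transpose (T-1), e1, det_mul]
    rw [det_transpose, h2, one_mul, ← neg_sub T (1:M3), det_neg] at this
    simp [Fintype.card_fin] at this
    linarith
  obtain ⟨w, hw0, hww⟩ := (Matrix.exists_mulVec_eq_zero_iff).mpr hdet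
  have hTw : T *ᵥ w = w := by
    rw [Matrix.sub_mulVec, Matrix.one_mulVec, sub_eq_zero] at hww
    exact hww
  have hnn : 0 ≤ w ⬝ᵥ w := Finset.sum_nonneg fun i _ => mul_self_nonneg (w i)
  have hpos : 0 < w ⬝ᵥ w := by
    rcases hnn.lt_or_eq with h | h
    · exact h
    · exact absurd (dotProduct_self_eq_zero.mp h.symm) hw0
  set c : ℝ := (Real.sqrt (w ⬝ᵥ w))⁻¹ with hc
  have hs : Real.sqrt (w ⬝ᵥ w) ^ 2 = w ⬝ᵥ w := Real.sq_sqrt hnn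
  have hsne : Real.sqrt (w ⬝ᵥ w) ≠ 0 := by positivity
  have hcsq : c^2 * (w ⬝ᵥ w) = 1 := by
    rw [hc, inv_pow, inv_mul_eq_one₀ (pow_ne_zero 2 hsne)]
    exact hs
  refine ⟨c • w, ?_, ?_, ?_⟩
  · rw [smul_dotProduct, dotProduct_smul, smul_eq_mul, smul_eq_mul, ← hcsq]; ring
  · rw [Matrix.mulVec_smul, hTw]
  · have h3 : Tᵀ *ᵥ w = w := by
      have := congrArg (fun v => Tᵀ *ᵥ v) hTw
      simpa [Matrix.mulVec_mulVec, h1] using this.symm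
    rw [Matrix.mulVec_smul, h3]

theorem rayleigh (B : M3) (hB : B.IsHermitian) (u : V3) (hu : u ⬝ᵥ u = 1)
    (lamm lamM : ℝ) (hbound : ∀ lam : ℝ, IsEigen B lam → lamm ≤ lam ∧ lam ≤ lamM) :
    lamm ≤ u ⬝ᵥ (B *ᵥ u) ∧ u ⬝ᵥ (B *ᵥ u) ≤ lamM := by
  set U : M3 := (hB.eigenvectorUnitary : M3) with hU
  have hU1 : U * star U = 1 := (Matrix.mem_unitaryGroup_iff).mp hB.eigenvectorUnitary.2
  have hstar : star U = Uᵀ := by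
    rw [Matrix.star_eq_conjTranspose, conjTranspose_eq_transpose_of_trivial]
  set lam : Fin 3 → ℝ := hB.eigenvalues with hlam
  have hdiag : (Matrix.diagonal (RCLike.ofReal ∘ lam) : M3) = Matrix.diagonal lam := by
    congr 1
  have hspec : B = U * Matrix.diagonal lam * Uᵀ := by
    rw [← hdiag, ← hstar]; exact hB.spectral_theorem
  set c : V3 := Uᵀ *ᵥ u with hc
  have hUc : U *ᵥ c = u := by
    rw [hc, Matrix.mulVec_mulVec, ← hstar, hU1, Matrix.one_mulVec]
  have hval : u ⬝ᵥ (B *ᵥ u) = ∑ i, lam i * c i ^ 2 := by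
    rw [hspec, ← Matrix.mulVec_mulVec, ← Matrix.mulVec_mulVec, ← hc,
      Matrix.dotProduct_mulVec u U, ← Matrix.mulVec_transpose, ← hc]
    simp [Matrix.mulVec_diagonal, dotProduct]
    exact Finset.sum_congr rfl fun i _ => by ring
  have hcc : ∑ i, c i ^ 2 = 1 := by
    have : c ⬝ᵥ c = 1 := by
      rw [hc]
      rw [Matrix.dotProduct_mulVec, Matrix.vecMul_transpose, hUc]
      exact hu
    simpa [dotProduct, pow_two] using this
  have heig : ∀ i : Fin 3, IsEigen B (lam i) := by
    intro i
    refine ⟨⇑(hB.eigenvectorBasis i), ?_, hB.mulVec_eigenvectorBasis i⟩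
    intro h0
    refine hB.eigenvectorBasis.toBasis.ne_zero i ?_
    ext j
    simpa using congrFun h0 j
  have hnn : ∀ i : Fin 3, 0 ≤ c i ^ 2 := fun i => sq_nonneg _
  constructor
  · rw [hval]
    calc lamm = ∑ i, lamm * c i ^ 2 := by rw [← Finset.mul_sum, hcc, mul_one]
    _ ≤ ∑ i, lam i * c i ^ 2 :=
        Finset.sum_le_sum fun i _ => mul_le_mul_of_nonneg_right (hbound _ (heig i)).1 (hnn i)
  · rw [hval]
    calc ∑ i, lam i * c i ^ 2 ≤ ∑ i, lamM * c i ^ 2 :=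
        Finset.sum_le_sum fun i _ => mul_le_mul_of_nonneg_right (hbound _ (heig i)).2 (hnn i)
    _ = lamM := by rw [← Finset.mul_sum, hcc, mul_one]

theorem so3_sym_decomp (T : M3) (hT : T ∈ SO3) (u : V3) (hu : u ⬝ᵥ u = 1)
    (hTu : T *ᵥ u = u) (hTtu : Tᵀ *ᵥ u = u) :
    T + Tᵀ = (T.trace - 1) • (1 : M3) + (3 - T.trace) • vecMulVec u u := by
  obtain ⟨h1, h2⟩ := hT
  have hTTt : T * Tᵀ = 1 := mul_eq_one_comm.mp h1
  have hTtT : Tᵀ * T = 1 := h1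
  set t : ℝ := T.trace with ht
  set P : M3 := vecMulVec u u with hP
  have hmv : ∀ i, ∑ k, T i k * u k = u i := by
    intro i
    have h := congrFun hTu i
    simpa [Matrix.mulVec, dotProduct] using h
  have hmvt : ∀ j, ∑ k, u k * T k j = u j := by
    intro j
    have h := congrFun hTtu j
    simpa [Matrix.mulVec, dotProduct, Matrix.transpose_apply, mul_comm] using h
  have hTP : T * P = P := by
    ext i j
    simp only [mul_apply, vecMulVec_apply, hP]
    calc ∑ k, T i k * (u k * u j) = (∑ k, T i k * u k) * u j := by
          rw [Finset.sum_mul]; exact Finset.sum_congr rfl fun k _ => by ring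
    _ = u i * u j := by rw [hmv]
  have hPT : P * T = P := by
    ext i j
    simp only [mul_apply, vecMulVec_apply, hP]
    calc ∑ k, u i * u k * T k j = u i * ∑ k, u k * T k j := by
          rw [Finset.mul_sum]; exact Finset.sum_congr rfl fun k _ => by ring
    _ = u i * u j := by rw [hmvt]
  have hmvT : ∀ i, ∑ k, Tᵀ i k * u k = u i := by
    intro i
    have h := congrFun hTtu i
    simpa [Matrix.mulVec, dotProduct] using h
  have hmvTt : ∀ j, ∑ k, u k * Tᵀ k j = u j := by
    intro j
    have h := congrFun hTu j
    simpa [Matrix.mulVec, dotProduct, Matrix.transpose_apply, mul_comm] using h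
  have hTtP : Tᵀ * P = P := by
    ext i j
    simp only [mul_apply, vecMulVec_apply, hP]
    calc ∑ k, Tᵀ i k * (u k * u j) = (∑ k, Tᵀ i k * u k) * u j := by
          rw [Finset.sum_mul]; exact Finset.sum_congr rfl fun k _ => by ring
    _ = u i * u j := by rw [hmvT]
  have hPTt : P * Tᵀ = P := by
    ext i j
    simp only [mul_apply, vecMulVec_apply, hP]
    calc ∑ k, u i * u k * Tᵀ k j = u i * ∑ k, u k * Tᵀ k j := by
          rw [Finset.mul_sum]; exact Finset.sum_congr rfl fun k _ => by ring
    _ = u i * u j := by rw [hmvTt]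
  have hPP : P * P = P := by
    ext i j
    simp only [mul_apply, vecMulVec_apply, hP]
    calc ∑ k, u i * u k * (u k * u j) = (u i * u j) * ∑ k, u k * u k := by
          rw [Finset.mul_sum]; exact Finset.sum_congr rfl fun k _ => by ring
    _ = u i * u j := by
          have : ∑ k, u k * u k = 1 := hu
          rw [this, mul_one]
  have htrP : P.trace = 1 := by
    simp only [Matrix.trace, Matrix.diag, vecMulVec_apply, hP]
    exact hu
  have htrT2 : (T*T).trace = t^2 - 2*t := (so3_facts T ⟨h1, h2⟩).2
  have htrTt2 : (Tᵀ*Tᵀ).trace = t^2 - 2*t := by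
    have e : Tᵀ * Tᵀ = (T * T)ᵀ := by rw [transpose_mul]
    rw [e, trace_transpose, htrT2]
  have hPsym : Pᵀ = P := by
    ext i j
    simp [vecMulVec_apply, transpose_apply, hP, mul_comm]
  set D : M3 := T + Tᵀ + (1-t)•(1:M3) - (3-t)•P with hD
  have hDsym : Dᵀ = D := by
    rw [hD]
    simp only [transpose_sub, transpose_add, transpose_smul, transpose_one,
      transpose_transpose, hPsym]
    module
  have expand : D * D = T*T + 1 + (1-t)•T - (3-t)•P
      + (1 + Tᵀ*Tᵀ + (1-t)•Tᵀ - (3-t)•P)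
      + ((1-t)•T + (1-t)•Tᵀ + ((1-t)*(1-t))•(1:M3) - ((1-t)*(3-t))•P)
      - ((3-t)•P + (3-t)•P + ((3-t)*(1-t))•P - ((3-t)*(3-t))•P) := by
    rw [hD]
    simp only [Matrix.add_mul, Matrix.mul_add, Matrix.sub_mul, Matrix.mul_sub,
      Matrix.smul_mul, Matrix.mul_smul, smul_smul, Matrix.mul_one, Matrix.one_mul,
      hTP, hPT, hTtP, hPTt, hPP, hTTt, hTtT]
    module
  have trDD : (D * D).trace = 0 := by
    rw [expand]
    simp only [trace_add, trace_sub, trace_smul, trace_one, smul_eq_mul,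
      htrT2, htrTt2, htrP, trace_transpose, Fintype.card_fin, Nat.cast_ofNat]
    ring
  have trDtD : (Dᵀ * D).trace = 0 := by rw [hDsym]; exact trDD
  have hsq : ∑ j, ∑ i, D i j * D i j = 0 := by
    have e : (Dᵀ * D).trace = ∑ j, ∑ i, D i j * D i j := by
      simp [Matrix.trace, Matrix.diag, Matrix.mul_apply, Matrix.transpose_apply]
    rw [e] at trDtD
    exact trDtD
  have hD0 : D = 0 := by
    ext i j
    have h1' := (Finset.sum_eq_zero_iff_of_nonneg
      (fun j _ => Finset.sum_nonneg fun i _ => mul_self_nonneg (D i j))).mp hsq j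
      (Finset.mem_univ j)
    have h2' := (Finset.sum_eq_zero_iff_of_nonneg
      (fun i _ => mul_self_nonneg (D i j))).mp h1' i (Finset.mem_univ i)
    simpa using mul_self_eq_zero.mp h2'
  have hsub : T + Tᵀ - ((t - 1) • (1:M3) + (3 - t) • P) = D := by
    rw [hD]; module
  rw [hD0] at hsub
  exact sub_eq_zero.mp hsub

theorem trace_mul_self_transpose_nonneg (M : M3) : 0 ≤ (M * Mᵀ).trace := by
  have e : (M * Mᵀ).trace = ∑ i, ∑ j, M i j * M i j := by
    simp [Matrix.trace, Matrix.diag, Matrix.mul_apply, Matrix.transpose_apply]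
  rw [e]
  exact Finset.sum_nonneg fun i _ => Finset.sum_nonneg fun j _ => mul_self_nonneg _

end TBaux

theorem trace_bounds_on_SO3
    (A : M3) (hA : A.PosDef)
    (lamm lamM : ℝ) (hm : IsEigen (Abar A) lamm) (hM : IsEigen (Abar A) lamM)
    (hbound : ∀ lam : ℝ, IsEigen (Abar A) lam → lamm ≤ lam ∧ lam ≤ lamM) :
    ∀ T ∈ SO3,
      lamm * ((1 : M3) - T).trace ≤ (A * ((1 : M3) - T)).trace ∧
      (A * ((1 : M3) - T)).trace ≤ lamM * ((1 : M3) - T).trace := by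
  intro T hT
  obtain ⟨u, hu, hTu, hTtu⟩ := TBaux.axis_exists T hT
  have hkey := TBaux.so3_sym_decomp T hT u hu hTu hTtu
  obtain ⟨h1, h2⟩ := hT
  have hTTt : T * Tᵀ = 1 := mul_eq_one_comm.mp h1
  set t : ℝ := T.trace with ht
  set P : M3 := vecMulVec u u with hP
  have hAsym : Aᵀ = A := by
    have := hA.1
    rwa [Matrix.IsHermitian, conjTranspose_eq_transpose_of_trivial] at this
  have hABar : (Abar A).IsHermitian := by
    show (Abar A)ᴴ = Abar A
    rw [conjTranspose_eq_transpose_of_trivial]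
    simp only [Abar, transpose_smul, transpose_sub, transpose_smul, transpose_one, hAsym]
  have hATt : (A * Tᵀ).trace = (A * T).trace := by
    calc (A * Tᵀ).trace = ((A * Tᵀ)ᵀ).trace := (trace_transpose _).symm
    _ = (T * Aᵀ).trace := by rw [transpose_mul, transpose_transpose]
    _ = (A * T).trace := by rw [hAsym, trace_mul_comm]
  have htrAP : (A * P).trace = u ⬝ᵥ (A *ᵥ u) := by
    simp only [Matrix.trace, Matrix.diag, Matrix.mul_apply, vecMulVec_apply, hP,
      dotProduct, Matrix.mulVec]
    exact Finset.sum_congr rfl fun i _ => by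
      rw [Finset.mul_sum]; exact Finset.sum_congr rfl fun k _ => by ring
  have e0 : (1:M3) - T + (1 - Tᵀ) = (3-t)•((1:M3) - P) := by
    calc (1:M3) - T + (1 - Tᵀ) = (1+1) - (T + Tᵀ) := by abel
    _ = (1+1) - ((t-1)•(1:M3) + (3-t)•P) := by rw [hkey]
    _ = (3-t)•((1:M3) - P) := by module
  have e1 : A * ((1:M3) - T) + A * (1 - Tᵀ) = (3-t) • (A * ((1:M3) - P)) := by
    rw [← Matrix.mul_add, e0, Matrix.mul_smul]
  have htr1 : ((1:M3) - Tᵀ).trace = 3 - t := by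
    simp [trace_sub, trace_one, trace_transpose, ht]
  have htrace_eq : 2 * (A * ((1:M3) - T)).trace = (3-t) * (A.trace - u ⬝ᵥ (A *ᵥ u)) := by
    have hAT' : (A * ((1:M3) - Tᵀ)).trace = (A * ((1:M3) - T)).trace := by
      rw [Matrix.mul_sub, Matrix.mul_sub, Matrix.mul_one, trace_sub, trace_sub, hATt]
    have := congrArg Matrix.trace e1
    rw [trace_add, hAT', trace_smul, smul_eq_mul] at this
    have h4 : (A * ((1:M3) - P)).trace = A.trace - u ⬝ᵥ (A *ᵥ u) := by
      rw [Matrix.mul_sub, Matrix.mul_one, trace_sub, htrAP]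
    rw [h4] at this
    have h5 : (A * ((1:M3) - T)).trace = A.trace - (A * T).trace := by
      rw [Matrix.mul_sub, Matrix.mul_one, trace_sub]
    rw [h5]
    linarith
  have hr : u ⬝ᵥ (Abar A *ᵥ u) = (A.trace - u ⬝ᵥ (A *ᵥ u)) / 2 := by
    simp only [Abar, Matrix.smul_mulVec, Matrix.sub_mulVec, Matrix.one_mulVec,
      dotProduct_smul, dotProduct_sub, smul_eq_mul, hu]
    ring
  set r : ℝ := u ⬝ᵥ (Abar A *ᵥ u) with hrdef
  have hmain : (A * ((1:M3) - T)).trace = (3 - t) * r := by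
    rw [hr]; linarith
  have htrI : ((1:M3) - T).trace = 3 - t := by
    simp [trace_sub, trace_one, ht]
  have hmu : 0 ≤ 3 - t := by
    have e2 : ((1:M3) - T) * ((1:M3) - T)ᵀ = 1 - T - Tᵀ + T * Tᵀ := by
      rw [transpose_sub, transpose_one]
      noncomm_ring
    have e3 : (((1:M3) - T) * ((1:M3) - T)ᵀ).trace = 2 * (3 - t) := by
      rw [e2, hTTt, trace_add, trace_sub, trace_sub, trace_one, trace_transpose,
        Fintype.card_fin]
      push_cast
      ring
    have := TBaux.trace_mul_self_transpose_nonneg ((1:M3) - T)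
    rw [e3] at this
    linarith
  obtain ⟨hrm, hrM⟩ := TBaux.rayleigh (Abar A) hABar u hu lamm lamM hbound
  rw [htrI, hmain]
  constructor
  · calc lamm * (3 - t) ≤ r * (3 - t) := mul_le_mul_of_nonneg_right hrm hmu
    _ = (3 - t) * r := by ring
  · calc (3 - t) * r = r * (3 - t) := by ring
    _ ≤ lamM * (3 - t) := mul_le_mul_of_nonneg_right hrM hmu
end
end
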